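/- Let u1, u2 be positive reals, κ ≥ 0, and 0 ≤ η ≤ 2κ. Let U ∈ ℝ^{1×N1} have first two entries u1, u2 and zeros elsewhere, and b = 2κ. Then the set of minimizers of ‖x‖₁ subject to |u1 x1 + u2 x2 − 2κ| ≤ η equals: {((2κ−η)/u1) e1} if u1 > u2; {((2κ−η)/u2) e2} if u1 < u2; and {((2κ−η)/u1)(t e1 + (1−t) e2) : t ∈ [0,1]} if u1 = u2. -/

import Mathlib

/-!
For `b ≤ a`, every `x` with `a xᵢ + b xⱼ ≥ c` satisfies
`c ≤ a xᵢ + b xⱼ ≤ a |xᵢ| + a |xⱼ| ≤ a ‖x‖₁`, and the bound `‖x‖₁ ≥ c / a` is attained at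
`(c / a) eᵢ`. A minimizer therefore makes every step of this chain tight: it is supported on
`{i, j}`, nonnegative, lies on the face `a xᵢ + b xⱼ = c`, and carries no mass on `j` when `b < a`.
Here `c = 2κ - η` and `a = max u1 u2`.
-/

open Finset

section TwoCoordinates

variable {ι : Type*} [Fintype ι]

def l1Argmin (P : (ι → ℝ) → Prop) : Set (ι → ℝ) :=
  {x | P x ∧ ∀ y, P y → ∑ k, |x k| ≤ ∑ k, |y k|}

lemma mem_l1Argmin_iff {P : (ι → ℝ) → Prop} {m : ℝ} {x x₀ : ι → ℝ}
    (hlow : ∀ y, P y → m ≤ ∑ k, |y k|) (hx₀ : P x₀) (hm : ∑ k, |x₀ k| ≤ m) :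
    x ∈ l1Argmin P ↔ P x ∧ ∑ k, |x k| ≤ m :=
  ⟨fun ⟨hx, hmin⟩ => ⟨hx, (hmin x₀ hx₀).trans hm⟩,
    fun ⟨hx, hxm⟩ => ⟨hx, fun y hy => hxm.trans (hlow y hy)⟩⟩

variable [DecidableEq ι] {i j : ι}

lemma abs_add_abs_le_sum_abs (hij : i ≠ j) (x : ι → ℝ) : |x i| + |x j| ≤ ∑ k, |x k| := by
  simpa [sum_pair hij] using sum_le_univ_sum_of_nonneg (s := {i, j}) fun k => abs_nonneg (x k)

lemma eq_single_add_single_of_sum_abs_le (hij : i ≠ j) {x : ι → ℝ}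
    (h : ∑ k, |x k| ≤ |x i| + |x j|) : x = Pi.single i (x i) + Pi.single j (x j) := by
  have hrest : ∑ k ∈ univ \ {i, j}, |x k| = 0 := by
    have := sum_sdiff (subset_univ {i, j}) (f := fun k => |x k|)
    rw [sum_pair hij] at this
    linarith [sum_nonneg fun k (_ : k ∈ univ \ {i, j}) => abs_nonneg (x k)]
  funext k
  by_cases hki : k = i
  · subst hki; simp [hij]
  by_cases hkj : k = j
  · subst hkj; simp [hki]
  have hk : k ∈ univ \ {i, j} := by simp [hki, hkj]
  simpa [hki, hkj] using (sum_eq_zero_iff_of_nonneg fun k _ => abs_nonneg (x k)).1 hrest k hk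

lemma sum_abs_single_add_single (hij : i ≠ j) (p q : ℝ) :
    ∑ k, |(Pi.single i p + Pi.single j q : ι → ℝ) k| = |p| + |q| := by
  rw [Fintype.sum_eq_add i j hij fun k hk => by simp [hk.1, hk.2]]
  simp [hij, hij.symm]

variable {a b c β η : ℝ} {x : ι → ℝ}

lemma le_mul_sum_abs (hij : i ≠ j) (hb : 0 ≤ b) (hba : b ≤ a) (h : c ≤ a * x i + b * x j) :
    c ≤ a * ∑ k, |x k| := by
  have ha : 0 ≤ a := hb.trans hba
  calc c ≤ a * x i + b * x j := h
    _ ≤ a * |x i| + a * |x j| := by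
      gcongr ?_ + ?_
      · exact mul_le_mul_of_nonneg_left (le_abs_self _) ha
      · exact (mul_le_mul_of_nonneg_left (le_abs_self _) hb).trans
          (mul_le_mul_of_nonneg_right hba (abs_nonneg _))
    _ ≤ a * ∑ k, |x k| := by rw [← mul_add]; gcongr; exact abs_add_abs_le_sum_abs hij x

lemma eq_of_mul_sum_abs_le (hij : i ≠ j) (hb : 0 < b) (hba : b ≤ a) (h : c ≤ a * x i + b * x j)
    (hs : a * ∑ k, |x k| ≤ c) :
    x = Pi.single i (x i) + Pi.single j (x j) ∧ 0 ≤ x i ∧ 0 ≤ x j ∧ (a - b) * x j = 0 ∧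
      a * x i + b * x j = c := by
  have ha : 0 < a := hb.trans_le hba
  -- every inequality in the chain of `le_mul_sum_abs` is tight
  have hi : a * (|x i| - x i) ≥ 0 := mul_nonneg ha.le (sub_nonneg.2 (le_abs_self _))
  have hj : b * (|x j| - x j) ≥ 0 := mul_nonneg hb.le (sub_nonneg.2 (le_abs_self _))
  have hab : (a - b) * |x j| ≥ 0 := mul_nonneg (sub_nonneg.2 hba) (abs_nonneg _)
  have hrest : a * (∑ k, |x k| - (|x i| + |x j|)) ≥ 0 :=
    mul_nonneg ha.le (sub_nonneg.2 (abs_add_abs_le_sum_abs hij x))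
  have htotal : a * (|x i| - x i) + b * (|x j| - x j) + (a - b) * |x j| +
      a * (∑ k, |x k| - (|x i| + |x j|)) = a * ∑ k, |x k| - (a * x i + b * x j) := by ring
  have hxi : |x i| ≤ x i := by
    linarith [nonpos_of_mul_nonpos_right (a := a) (b := |x i| - x i) (by linarith) ha]
  have hxj : |x j| ≤ x j := by
    linarith [nonpos_of_mul_nonpos_right (a := b) (b := |x j| - x j) (by linarith) hb]
  have hsum : ∑ k, |x k| ≤ |x i| + |x j| := by
    linarith [nonpos_of_mul_nonpos_right (a := a) (b := ∑ k, |x k| - (|x i| + |x j|))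
      (by linarith) ha]
  have hxj' : x j = |x j| := le_antisymm (le_abs_self _) hxj
  refine ⟨eq_single_add_single_of_sum_abs_le hij hsum, (abs_nonneg _).trans hxi,
    (abs_nonneg _).trans hxj, by rw [hxj']; linarith, by linarith⟩

lemma exists_mem_Icc_eq_add_mul {p q : ℝ} (hp : 0 ≤ p) (hq : 0 ≤ q) :
    ∃ t ∈ Set.Icc (0 : ℝ) 1, p = (p + q) * t ∧ q = (p + q) * (1 - t) := by
  rcases (add_nonneg hp hq).eq_or_lt with hs | hs
  · exact ⟨0, by simp, by linarith, by linarith⟩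
  · refine ⟨p / (p + q), ⟨by positivity, (div_le_one hs).2 (by linarith)⟩, ?_, ?_⟩
    · field_simp
    · field_simp; ring

theorem mem_l1Argmin_band_iff (hij : i ≠ j) (hb : 0 < b) (hba : b ≤ a) (hη : 0 ≤ η)
    (hηβ : η ≤ β) :
    x ∈ l1Argmin (fun x : ι → ℝ => |a * x i + b * x j - β| ≤ η) ↔
      ∃ p q, 0 ≤ p ∧ 0 ≤ q ∧ (a - b) * q = 0 ∧ a * p + b * q = β - η ∧
        x = Pi.single i p + Pi.single j q := by
  have ha : 0 < a := hb.trans_le hba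
  have two_point : ∀ p q, 0 ≤ p → 0 ≤ q → (a - b) * q = 0 → a * p + b * q = β - η →
      |a * (Pi.single i p + Pi.single j q : ι → ℝ) i +
          b * (Pi.single i p + Pi.single j q : ι → ℝ) j - β| ≤ η ∧
        ∑ k, |(Pi.single i p + Pi.single j q : ι → ℝ) k| ≤ (β - η) / a := by
    intro p q hp hq hpq hc
    rw [sum_abs_single_add_single hij, abs_of_nonneg hp, abs_of_nonneg hq, le_div_iff₀' ha]
    simp only [Pi.add_apply, Pi.single_eq_same, Pi.single_eq_of_ne hij,
      Pi.single_eq_of_ne hij.symm, add_zero, zero_add]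
    exact ⟨abs_le.2 ⟨by linarith, by linarith⟩, by linarith⟩
  have hlow : ∀ y : ι → ℝ, |a * y i + b * y j - β| ≤ η → (β - η) / a ≤ ∑ k, |y k| := by
    intro y hy
    rw [div_le_iff₀' ha]
    exact le_mul_sum_abs hij hb.le hba (by linarith [(abs_le.1 hy).1])
  obtain ⟨hx₀, hm⟩ := two_point ((β - η) / a) 0 (div_nonneg (by linarith) ha.le) le_rfl
    (mul_zero _) (by field_simp; ring)
  rw [mem_l1Argmin_iff hlow hx₀ hm]
  constructor
  · rintro ⟨hx, hs⟩
    obtain ⟨hxe, hp, hq, hpq, hc⟩ := eq_of_mul_sum_abs_le hij hb hba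
      (by linarith [(abs_le.1 hx).1]) ((le_div_iff₀' ha).1 hs)
    exact ⟨x i, x j, hp, hq, hpq, hc, hxe⟩
  · rintro ⟨p, q, hp, hq, hpq, hc, rfl⟩
    exact two_point p q hp hq hpq hc

theorem l1Argmin_band_eq_of_lt (hij : i ≠ j) (hb : 0 < b) (hba : b < a) (hη : 0 ≤ η)
    (hηβ : η ≤ β) :
    l1Argmin (fun x : ι → ℝ => |a * x i + b * x j - β| ≤ η) =
      {((β - η) / a) • Pi.single i 1} := by
  have ha : 0 < a := hb.trans hba
  ext x
  rw [mem_l1Argmin_band_iff hij hb hba.le hη hηβ, Set.mem_singleton_iff,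
    ← Pi.single_smul, smul_eq_mul, mul_one]
  constructor
  · rintro ⟨p, q, -, -, hpq, hc, rfl⟩
    obtain rfl : q = 0 := (mul_eq_zero.1 hpq).resolve_left (sub_ne_zero.2 hba.ne')
    rw [Pi.single_zero, add_zero, (eq_div_iff ha.ne').2 (by linarith : p * a = β - η)]
  · rintro rfl
    exact ⟨(β - η) / a, 0, div_nonneg (by linarith) ha.le, le_rfl, mul_zero _,
      by field_simp; ring, by simp⟩

theorem l1Argmin_band_eq_of_eq (hij : i ≠ j) (ha : 0 < a) (hη : 0 ≤ η) (hηβ : η ≤ β) :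
    l1Argmin (fun x : ι → ℝ => |a * x i + a * x j - β| ≤ η) =
      {x | ∃ t ∈ Set.Icc (0 : ℝ) 1,
        x = ((β - η) / a) • (t • Pi.single i 1 + (1 - t) • Pi.single j 1)} := by
  have hsmul : ∀ t : ℝ, ((β - η) / a) • (t • Pi.single i 1 + (1 - t) • Pi.single j 1) =
      (Pi.single i ((β - η) / a * t) + Pi.single j ((β - η) / a * (1 - t)) : ι → ℝ) := by
    intro t
    simp only [smul_add, ← Pi.single_smul, smul_eq_mul, mul_one]
  ext x
  simp only [mem_l1Argmin_band_iff hij ha le_rfl hη hηβ, Set.mem_ofPred_eq, hsmul, sub_self,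
    zero_mul, true_and]
  constructor
  · rintro ⟨p, q, hp, hq, hc, rfl⟩
    obtain ⟨t, ht, hpt, hqt⟩ := exists_mem_Icc_eq_add_mul hp hq
    have hpq : p + q = (β - η) / a := by rw [eq_div_iff ha.ne']; linarith
    exact ⟨t, ht, by rw [← hpq, ← hpt, ← hqt]⟩
  · rintro ⟨t, ht, rfl⟩
    have hs : 0 ≤ (β - η) / a := div_nonneg (by linarith) ha.le
    exact ⟨_, _, mul_nonneg hs ht.1, mul_nonneg hs (by linarith [ht.2]),
      by field_simp; ring, rfl⟩

end TwoCoordinates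

lemma ite_val_eq_piSingle {M : Type*} [Zero M] {n k : ℕ} (hk : k < n) (m : M) :
    (fun i : Fin n => if (i : ℕ) = k then m else 0) = Pi.single ⟨k, hk⟩ m := by
  funext i
  simp [Pi.single_apply, Fin.ext_iff]

theorem stmt_1 (N1 : ℕ) (hN : 2 ≤ N1) (u1 u2 κ η : ℝ)
    (hu1 : 0 < u1) (hu2 : 0 < u2) (hη0 : 0 ≤ η) (hη : η ≤ 2 * κ) :
    let e1 : Fin N1 → ℝ := fun i => if (i : ℕ) = 0 then 1 else 0
    let e2 : Fin N1 → ℝ := fun i => if (i : ℕ) = 1 then 1 else 0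
    let feas : (Fin N1 → ℝ) → Prop := fun x =>
      |u1 * x ⟨0, by omega⟩ + u2 * x ⟨1, by omega⟩ - 2 * κ| ≤ η
    let argmin : Set (Fin N1 → ℝ) :=
      {x | feas x ∧ ∀ y, feas y → (∑ i, |x i|) ≤ ∑ i, |y i|}
    (u2 < u1 → argmin = {((2 * κ - η) / u1) • e1}) ∧
    (u1 < u2 → argmin = {((2 * κ - η) / u2) • e2}) ∧
    (u1 = u2 → argmin =
      {x | ∃ t ∈ Set.Icc (0 : ℝ) 1,
        x = ((2 * κ - η) / u1) • (t • e1 + (1 - t) • e2)}) := by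
  intro e1 e2 feas argmin
  have hij : (⟨0, by omega⟩ : Fin N1) ≠ ⟨1, by omega⟩ := by simp [Fin.ext_iff]
  have he1 : e1 = Pi.single ⟨0, by omega⟩ 1 := ite_val_eq_piSingle _ _
  have he2 : e2 = Pi.single ⟨1, by omega⟩ 1 := ite_val_eq_piSingle _ _
  have hargmin : argmin = l1Argmin feas := rfl
  refine ⟨fun h => ?_, fun h => ?_, fun h => ?_⟩
  · rw [hargmin, he1]
    exact l1Argmin_band_eq_of_lt hij hu2 h hη0 hη
  · have hfeas : feas = fun x => |u2 * x ⟨1, by omega⟩ + u1 * x ⟨0, by omega⟩ - 2 * κ| ≤ η := by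
      simp only [feas, add_comm]
    rw [hargmin, hfeas, he2]
    exact l1Argmin_band_eq_of_lt hij.symm hu1 h hη0 hη
  · subst h
    rw [hargmin, he1, he2]
    exact l1Argmin_band_eq_of_eq hij hu1 hη0 hη
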